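/- arXiv:1707.03631 — 2 statements merged into one kernel-verified Lean document; each statement's English description precedes it below -/
import Mathlib

section
/- Let l(w) = Σᵢ (yᵢ − xᵢᵀw)² be the linear regression loss and let rᵢ = δ·sign(∇_{xᵢ} l(w)) be the FGSM adversarial perturbation of data point xᵢ. Then the adversarially perturbed loss Σᵢ (yᵢ − (xᵢ + rᵢ)ᵀw)² equals l(w) + Σᵢⱼ |δ·∂l/∂x_{ij}(w)| + δ²·wᵀ Γ w, where Γ = Σᵢ sign(∇_{xᵢ} l(w)) sign(∇_{xᵢ} l(w))ᵀ. -/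
/-!
Write `eᵢ = yᵢ - xᵢᵀw` for the residual of data point `i`. Its loss gradient is `gᵢ = cᵢ w` with
`cᵢ = -2 eᵢ`, so the FGSM perturbation shifts the residual to `eᵢ - δ sᵢ`, where
`sᵢ = sign(gᵢ)ᵀw`. Expanding the square gives `eᵢ² + δ cᵢ sᵢ + δ² sᵢ²`, and the cross term is
`δ gᵢᵀ sign(gᵢ) = δ ‖gᵢ‖₁`.
-/

open Finset

theorem Real.self_mul_sign (a : ℝ) : a * Real.sign a = |a| := by
  rcases lt_trichotomy a 0 with h | rfl | h
  · simp [Real.sign_of_neg h, abs_of_neg h]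
  · simp
  · simp [Real.sign_of_pos h, abs_of_pos h]

theorem sum_abs_mul_eq_mul_sum_sign_mul {ι : Type*} (s : Finset ι) {δ : ℝ} (hδ : 0 ≤ δ)
    (c : ℝ) (w : ι → ℝ) :
    ∑ j ∈ s, |δ * (c * w j)| = δ * c * ∑ j ∈ s, Real.sign (c * w j) * w j := by
  rw [mul_sum]
  refine sum_congr rfl fun j _ => ?_
  rw [abs_mul, abs_of_nonneg hδ, ← Real.self_mul_sign]
  ring

theorem sub_sum_add_mul_mul {ι : Type*} (s : Finset ι) (y δ : ℝ) (x u w : ι → ℝ) :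
    y - ∑ j ∈ s, (x j + δ * u j) * w j = (y - ∑ j ∈ s, x j * w j) - δ * ∑ j ∈ s, u j * w j := by
  simp only [add_mul, sum_add_distrib, mul_sum, mul_assoc]
  ring

theorem sq_sub_mul_sum_sign_mul {ι : Type*} [Fintype ι] (e : ℝ) {δ : ℝ} (hδ : 0 ≤ δ)
    (w : ι → ℝ) :
    (e - δ * ∑ j, Real.sign (-2 * e * w j) * w j) ^ 2 =
      e ^ 2 + ∑ j, |δ * (-2 * e * w j)| + δ ^ 2 * (∑ j, Real.sign (-2 * e * w j) * w j) ^ 2 := by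
  rw [sum_abs_mul_eq_mul_sum_sign_mul _ hδ]
  ring

open Finset in
/-- `wᵀΓw` is written as `Σᵢ (sign(∇_{xᵢ}l)ᵀw)²`. -/
theorem adversarial_training_decomposition (N D : ℕ)
    (x : Fin N → Fin D → ℝ) (y : Fin N → ℝ) (w : Fin D → ℝ) (δ : ℝ) (hδ : 0 ≤ δ)
    (l : (Fin D → ℝ) → ℝ) (hl : l = fun w => ∑ i, (y i - ∑ j, x i j * w j) ^ 2)
    (g : Fin N → Fin D → ℝ)
    (hg : g = fun i j => -2 * (y i - ∑ j', x i j' * w j') * w j)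
    (r : Fin N → Fin D → ℝ)
    (hr : r = fun i j => δ * Real.sign (g i j)) :
    ∑ i, (y i - ∑ j, (x i j + r i j) * w j) ^ 2 =
      l w + (∑ i, ∑ j, |δ * g i j|)
        + δ ^ 2 * ∑ i, (∑ j, Real.sign (g i j) * w j) ^ 2 := by
  subst hl hg hr
  rw [← sum_add_distrib, mul_sum, ← sum_add_distrib]
  refine sum_congr rfl fun i _ => ?_
  rw [sub_sum_add_mul_mul, sq_sub_mul_sum_sign_mul _ hδ]
end

section
/- Let l(w) = Σᵢ (yᵢ − xᵢᵀw)² with gradient ∂l/∂x_{ij}(w) = −2(yᵢ − xᵢᵀw)wⱼ, and suppose for each i the dropped set Sᵢ ⊆ {1,…,D} satisfies x_{ij}·∂l/∂x_{ij}(w) ≤ 0 for all j ∈ Sᵢ. Define ε^{adv}_{ij} = 0 if j ∈ Sᵢ and 1 otherwise. Then Σᵢ (yᵢ − (ε^{adv}ᵢ ⊙ xᵢ)ᵀw)² = l(w) + Σᵢ Σ_{j∈Sᵢ} |x_{ij}·∂l/∂x_{ij}(w)| + wᵀ Γ w, where Γ = Σᵢ ((1 − ε^{adv}ᵢ) ⊙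 xᵢ)((1 − ε^{adv}ᵢ) ⊙ xᵢ)ᵀ. -/
/-!
Dropping the coordinates `Sᵢ` removes `sᵢ = Σ_{j ∈ Sᵢ} x_{ij} wⱼ` from the prediction, so with the
residual `rᵢ = yᵢ - xᵢᵀw` the dropped loss of sample `i` is `(rᵢ + sᵢ)² = rᵢ² + 2 rᵢ sᵢ + sᵢ²`.
Here `sᵢ²` is the `Γ` term, and since `x_{ij} ∂l/∂x_{ij} = -2 rᵢ x_{ij} wⱼ` is nonpositive on `Sᵢ`,
its absolute values sum to exactly `2 rᵢ sᵢ`.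
-/

open Finset

section

variable {ι : Type*}

theorem sum_abs_mul_grad_of_nonpos (s : Finset ι) (x w : ι → ℝ) (r : ℝ)
    (hs : ∀ j ∈ s, x j * (-2 * r * w j) ≤ 0) :
    ∑ j ∈ s, |x j * (-2 * r * w j)| = 2 * r * ∑ j ∈ s, x j * w j := by
  rw [mul_sum]
  exact sum_congr rfl fun j hj => by rw [abs_of_nonpos (hs j hj)]; ring

variable [Fintype ι] [DecidableEq ι]

theorem sum_dropout_mul (s : Finset ι) (a b : ι → ℝ) :
    ∑ j, ((if j ∈ s then 0 else 1) * a j) * b j = ∑ j, a j * b j - ∑ j ∈ s, a j * b j := by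
  rw [← sum_ite_mem_eq s, ← sum_sub_distrib]
  exact sum_congr rfl fun j _ => by split_ifs <;> ring

theorem sum_dropped_mul (s : Finset ι) (a b : ι → ℝ) :
    ∑ j, ((1 - if j ∈ s then 0 else 1) * a j) * b j = ∑ j ∈ s, a j * b j := by
  rw [← sum_ite_mem_eq s]
  exact sum_congr rfl fun j _ => by split_ifs <;> ring

theorem sq_sub_dropout_sum (s : Finset ι) (x w : ι → ℝ) (y : ℝ)
    (hs : ∀ j ∈ s, x j * (-2 * (y - ∑ j', x j' * w j') * w j) ≤ 0) :
    (y - ∑ j, ((if j ∈ s then 0 else 1) * x j) * w j) ^ 2 =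
      (y - ∑ j, x j * w j) ^ 2 + ∑ j ∈ s, |x j * (-2 * (y - ∑ j', x j' * w j') * w j)|
        + (∑ j, ((1 - if j ∈ s then 0 else 1) * x j) * w j) ^ 2 := by
  rw [sum_dropout_mul, sum_dropped_mul, sum_abs_mul_grad_of_nonpos s x w _ hs]
  ring

end

/-- Adversarial dropout decomposition for linear regression. -/
theorem adversarial_dropout_decomposition (N D : ℕ)
    (x : Fin N → Fin D → ℝ) (y : Fin N → ℝ) (w : Fin D → ℝ)
    (S : Fin N → Finset (Fin D))
    (l : (Fin D → ℝ) → ℝ) (hl : l = fun w => ∑ i, (y i - ∑ j, x i j * w j) ^ 2)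
    (g : Fin N → Fin D → ℝ)
    (hg : g = fun i j => -2 * (y i - ∑ j', x i j' * w j') * w j)
    (hS : ∀ i, ∀ j ∈ S i, x i j * g i j ≤ 0)
    (ε : Fin N → Fin D → ℝ)
    (hε : ε = fun i j => if j ∈ S i then 0 else 1) :
    ∑ i, (y i - ∑ j, (ε i j * x i j) * w j) ^ 2 =
      l w + (∑ i, ∑ j ∈ S i, |x i j * g i j|)
        + ∑ i, (∑ j, ((1 - ε i j) * x i j) * w j) ^ 2 := by
  subst hl hg hε
  rw [← sum_add_distrib, ← sum_add_distrib]
  exact sum_congr rfl fun i _ => sq_sub_dropout_sum (S i) (x i) w (y i) (hS i)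
end
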